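/- Consider an irreducible WS lifting cascade starting from the lazy wavelet (B_0 = 1, B_1 = z), with alternating upper/lower triangular lifting steps having HS lifting filters of support radii t^(0), ..., t^(N−1) ≥ 1. Then for each n ≥ 0, the intermediate scalar filters E^(n)_0 and E^(n)_1 have support intervals centered at 0 and −1 respectively, with support radii satisfying r^(n)_{m_n} = r^(n)_{1−m_n} + 2t^(n) − 1, where m_n is the update characteristic of step n, and r^(0)_{1−m_0} = 0. -/

import Mathlib

noncomputable section

/-- FIR filters: Laurent polynomials over ℝ, `F(z) = Σ f(n) z^{-n}`,
represented by their coefficient function `n ↦ f n`; multiplication is convolution. -/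
abbrev Filt := AddMonoidAlgebra ℝ ℤ

/-- `SuppInt f a b` : the support interval of `f` is `[a,b]` (so `f` is a
nonzero FIR filter with `f a, f b ≠ 0` and all support in `[a,b]`). -/
def SuppInt (f : Filt) (a b : ℤ) : Prop :=
  f.coeff a ≠ 0 ∧ f.coeff b ≠ 0 ∧ ∀ n, f.coeff n ≠ 0 → a ≤ n ∧ n ≤ b

/-- Upsampling: `F(z) ↦ F(z²)`, i.e. `Σ f(n) z^{-2n}`. -/
def up (f : Filt) : Filt := AddMonoidAlgebra.ofCoeff (Finsupp.mapDomain (fun n : ℤ => 2 * n) f.coeff)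

/-!
Each lifting step replaces one filter `E_b` by `E_b + S(z²) E_{1-b}`. With `S(z²)` supported on
`[-2t+2, 2t]` (resp. `[-2t, 2t-2]`) and `E_{1-b}` centred at `-1` (resp. `0`), the product is
centred where `E_b` is, with radius `r_{1-b} + 2t - 1`; its extreme coefficients are products of
nonzero extreme coefficients. The sum has the same support interval as long as `E_b` lies strictly
inside it, i.e. `r_b < r_{1-b} + 2t - 1`. That holds at the lazy wavelet (`r_0 = r_1 = 0`) and is
propagated by alternation: after the step the filter updated next is the one that was not updated,
and its radius is the smaller one.
-/

open AddMonoidAlgebra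

lemma suppInt_single {c : ℤ} {x : ℝ} (hx : x ≠ 0) : SuppInt (single c x) c c := by
  have hc : (single c x).coeff c ≠ 0 := by rwa [coeff_single, Finsupp.single_eq_same]
  refine ⟨hc, hc, fun n hn => ?_⟩
  obtain rfl : c = n := by
    by_contra hcn
    exact hn (by rw [coeff_single, Finsupp.single_eq_of_ne' hcn])
  exact ⟨le_rfl, le_rfl⟩

lemma up_coeff_two_mul (f : Filt) (n : ℤ) : (up f).coeff (2 * n) = f.coeff n :=
  Finsupp.mapDomain_apply (fun _ _ h => by omega) f.coeff n

lemma SuppInt.up {f : Filt} {a b : ℤ} (h : SuppInt f a b) : SuppInt (up f) (2 * a) (2 * b) := by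
  classical
  refine ⟨by rw [up_coeff_two_mul]; exact h.1, by rw [up_coeff_two_mul]; exact h.2.1,
    fun n hn => ?_⟩
  obtain ⟨k, hk, rfl⟩ :=
    Finset.mem_image.1 (Finsupp.mapDomain_support (Finsupp.mem_support_iff.2 hn))
  have := h.2.2 k (Finsupp.mem_support_iff.1 hk)
  omega

lemma SuppInt.mul {f g : Filt} {a b c d : ℤ} (hf : SuppInt f a b) (hg : SuppInt g c d) :
    SuppInt (f * g) (a + c) (b + d) := by
  classical
  have bounds : ∀ x ∈ f.coeff.support, ∀ y ∈ g.coeff.support, a ≤ x ∧ x ≤ b ∧ c ≤ y ∧ y ≤ d :=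
    fun x hx y hy => by
      have := hf.2.2 x (Finsupp.mem_support_iff.1 hx)
      have := hg.2.2 y (Finsupp.mem_support_iff.1 hy)
      omega
  -- the extreme exponents `a + c` and `b + d` arise from a single product of coefficients
  have hlo : (f * g).coeff (a + c) = f.coeff a * g.coeff c :=
    coeff_mul_add_of_uniqueAdd fun x y hx hy _ => by have := bounds x hx y hy; omega
  have hhi : (f * g).coeff (b + d) = f.coeff b * g.coeff d :=
    coeff_mul_add_of_uniqueAdd fun x y hx hy _ => by have := bounds x hx y hy; omega
  refine ⟨by rw [hlo]; exact mul_ne_zero hf.1 hg.1, by rw [hhi]; exact mul_ne_zero hf.2.1 hg.2.1,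
    fun n hn => ?_⟩
  obtain ⟨x, hx, y, hy, rfl⟩ :=
    Finset.mem_add.1 (support_coeff_mul_subset f g (Finsupp.mem_support_iff.2 hn))
  have := bounds x hx y hy
  omega

lemma SuppInt.add_of_lt {f g : Filt} {a b a' b' : ℤ} (hf : SuppInt f a' b') (hg : SuppInt g a b)
    (ha : a < a') (hb : b' < b) : SuppInt (f + g) a b := by
  have outside : ∀ n, (n < a' ∨ b' < n) → (f + g).coeff n = g.coeff n := fun n hn => by
    have : f.coeff n = 0 := by by_contra h; have := hf.2.2 n h; omega
    simp [this]
  refine ⟨by rw [outside a (by omega)]; exact hg.1, by rw [outside b (by omega)]; exact hg.2.1,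
    fun n hn => ?_⟩
  by_cases hfn : f.coeff n = 0
  · exact hg.2.2 n (by simpa [hfn] using hn)
  · have := hf.2.2 n hfn
    omega

def SuppRadii (E : Bool → Filt) (r₀ r₁ : ℤ) : Prop :=
  SuppInt (E false) (-r₀) r₀ ∧ SuppInt (E true) (-r₁ - 1) (r₁ - 1)

lemma suppRadii_lazy {E : Bool → Filt} (h₀ : E false = single 0 1) (h₁ : E true = single (-1) 1) :
    SuppRadii E 0 0 := by
  rw [SuppRadii, h₀, h₁]
  exact ⟨suppInt_single one_ne_zero, suppInt_single one_ne_zero⟩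

-- `cond b r₁ r₀` is the radius of `E b`; the step replaces it by `cond b r₀ r₁ + 2 * t - 1`.
lemma SuppRadii.lift {E E' : Bool → Filt} {s : Filt} {b : Bool} {t r₀ r₁ : ℤ}
    (hE : SuppRadii E r₀ r₁)
    (hs : cond b (SuppInt s (-t) (t - 1)) (SuppInt s (-t + 1) t))
    (hr : cond b r₁ r₀ < cond b r₀ r₁ + 2 * t - 1)
    (hlift : E' b = E b + up s * E (!b)) (hkeep : E' (!b) = E (!b)) :
    SuppRadii E' (cond b r₀ (r₁ + 2 * t - 1)) (cond b (r₀ + 2 * t - 1) r₁) := by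
  obtain ⟨h₀, h₁⟩ := hE
  cases b <;> simp only [cond_false, cond_true, Bool.not_false, Bool.not_true] at hs hr hlift hkeep ⊢
  · refine ⟨?_, hkeep ▸ h₁⟩
    rw [hlift]
    convert h₀.add_of_lt (hs.up.mul h₁) (by omega) (by omega) using 2 <;> ring
  · refine ⟨hkeep ▸ h₀, ?_⟩
    rw [hlift]
    convert h₁.add_of_lt (hs.up.mul h₀) (by omega) (by omega) using 2 <;> ring

lemma cascade_suppRadii {N : ℕ} {S : ℕ → Filt} {m : ℕ → Bool} {t : ℕ → ℤ} {P : ℕ → Bool → Filt}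
    (halt : ∀ n, m (n + 1) = !(m n))
    (ht : ∀ n, n < N → 1 ≤ t n)
    (hSsupp : ∀ n, n < N →
      cond (m n) (SuppInt (S n) (-(t n)) (t n - 1)) (SuppInt (S n) (-(t n) + 1) (t n)))
    (hbase0 : P 0 false = single 0 1) (hbase1 : P 0 true = single (-1) 1)
    (hlift : ∀ n, n < N → P (n + 1) (m n) = P n (m n) + up (S n) * P n (!(m n)))
    (hkeep : ∀ n, n < N → P (n + 1) (!(m n)) = P n (!(m n))) :
    ∀ n ≤ N, ∃ r₀ r₁, SuppRadii (P n) r₀ r₁ ∧ cond (m n) r₁ r₀ ≤ cond (m n) r₀ r₁ := by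
  intro n
  induction n with
  | zero => exact fun _ => ⟨0, 0, suppRadii_lazy hbase0 hbase1, le_rfl⟩
  | succ n ih =>
    intro hn
    obtain ⟨r₀, r₁, hE, hord⟩ := ih (by omega)
    have htn := ht n (by omega)
    refine ⟨_, _, hE.lift (hSsupp n (by omega)) (by omega) (hlift n (by omega)) (hkeep n (by omega)),
      ?_⟩
    -- the filter updated next is the one left alone, whose radius is now the smaller
    rw [halt]
    revert hord
    cases m n <;> simp only [cond_false, cond_true, Bool.not_false, Bool.not_true] <;> omega

theorem ws_support_formula_general (N : ℕ) (S : ℕ → Filt) (m : ℕ → Bool) (t : ℕ → ℤ)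
    (P : ℕ → Bool → Filt)
    (halt : ∀ n, m (n + 1) = !(m n))
    (ht : ∀ n, n < N → 1 ≤ t n)
    (hSsupp : ∀ n, n < N →
      cond (m n) (SuppInt (S n) (-(t n)) (t n - 1))
                 (SuppInt (S n) (-(t n) + 1) (t n)))
    (hbase0 : P 0 false = AddMonoidAlgebra.single 0 1)
    (hbase1 : P 0 true = AddMonoidAlgebra.single (-1) 1)
    (hlift : ∀ n, n < N → P (n + 1) (m n) = P n (m n) + up (S n) * P n (!(m n)))
    (hkeep : ∀ n, n < N → P (n + 1) (!(m n)) = P n (!(m n))) :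
    ∀ n, n < N → ∃ r0 r1 : ℤ,
      SuppInt (P (n + 1) false) (-r0) r0 ∧
      SuppInt (P (n + 1) true) (-r1 - 1) (r1 - 1) ∧
      cond (m n) r1 r0 = cond (m n) r0 r1 + 2 * t n - 1 ∧
      (n = 0 → cond (m 0) r0 r1 = 0) := by
  intro n hn
  obtain ⟨r₀, r₁, hE, hord, hzero⟩ : ∃ r₀ r₁, SuppRadii (P n) r₀ r₁ ∧
      cond (m n) r₁ r₀ ≤ cond (m n) r₀ r₁ ∧ (n = 0 → r₀ = 0 ∧ r₁ = 0) := by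
    cases n with
    | zero => exact ⟨0, 0, suppRadii_lazy hbase0 hbase1, le_rfl, fun _ => ⟨rfl, rfl⟩⟩
    | succ k =>
      obtain ⟨r₀, r₁, hE, hord⟩ :=
        cascade_suppRadii halt ht hSsupp hbase0 hbase1 hlift hkeep (k + 1) hn.le
      exact ⟨r₀, r₁, hE, hord, fun h => absurd h k.succ_ne_zero⟩
  have htn := ht n hn
  obtain ⟨h₀, h₁⟩ := hE.lift (hSsupp n hn) (by omega) (hlift n hn) (hkeep n hn)
  refine ⟨_, _, h₀, h₁, by cases m n <;> rfl, ?_⟩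
  rintro rfl
  obtain ⟨rfl, rfl⟩ := hzero rfl
  cases m 0 <;> rfl

/-- the WS support interval formula.  For an irreducible WS lifting
cascade from the lazy wavelet (`B₀ = 1`, `B₁ = z`), with update characteristics
`m n` (`false` = upper/lowpass, `true` = lower/highpass) alternating, and HS
lifting filters `S n` of support radius `t n ≥ 1`, the intermediate filters
`P (n+1) false = E⁽ⁿ⁾₀` and `P (n+1) true = E⁽ⁿ⁾₁` are centered at `0` and `−1`
respectively, with support radii satisfying
`r⁽ⁿ⁾_{mₙ} = r⁽ⁿ⁾_{1−mₙ} + 2 tⁿ − 1` and `r⁽⁰⁾_{1−m₀} = 0`. -/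
theorem ws_support_formula (N : ℕ) (S : ℕ → Filt) (m : ℕ → Bool) (t : ℕ → ℤ)
    (P : ℕ → Bool → Filt)
    (halt : ∀ n, m (n + 1) = !(m n))
    (ht : ∀ n, n < N → 1 ≤ t n)
    (hSsym : ∀ n, n < N → ∀ k : ℤ,
      (S n).coeff k = cond (m n) ((S n).coeff (-1 - k)) ((S n).coeff (1 - k)))
    (hSsupp : ∀ n, n < N →
      cond (m n) (SuppInt (S n) (-(t n)) (t n - 1))
                 (SuppInt (S n) (-(t n) + 1) (t n)))
    (hbase0 : P 0 false = AddMonoidAlgebra.single 0 1)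
    (hbase1 : P 0 true = AddMonoidAlgebra.single (-1) 1)
    (hlift : ∀ n, n < N → P (n + 1) (m n) = P n (m n) + up (S n) * P n (!(m n)))
    (hkeep : ∀ n, n < N → P (n + 1) (!(m n)) = P n (!(m n))) :
    ∀ n, n < N → ∃ r0 r1 : ℤ,
      SuppInt (P (n + 1) false) (-r0) r0 ∧
      SuppInt (P (n + 1) true) (-r1 - 1) (r1 - 1) ∧
      cond (m n) r1 r0 = cond (m n) r0 r1 + 2 * t n - 1 ∧
      (n = 0 → cond (m 0) r0 r1 = 0) :=
  ws_support_formula_general N S m t P halt ht hSsupp hbase0 hbase1 hlift hkeep
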